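/- arXiv:2503.08155 — 2 statements merged into one kernel-verified Lean document; each statement's English description precedes it below -/
import Mathlib

section
/- Suppose ℓ satisfies the Metric Loss Assumption, is bounded above by L > 0, and satisfies min_{y ≠ y'} ℓ(y, y') > l for some l > 0; suppose every f in the hypothesis class H is a measurable surjective function. If W_{1,ℓ}(p_y, q_y) < δ for some δ > 0 and CC(κ) holds for H for some κ > 0, then LJE(λ) holds for H with λ = 2κ + ((L + l)/l)·δ. -/
open MeasureTheory ProbabilityTheory

/-- A coupling of `μ` and `ν`: a joint measure on the product with the given marginals. -/
def IsCoupling {A B : Type*} [MeasurableSpace A] [MeasurableSpace B]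
    (γ : Measure (A × B)) (μ : Measure A) (ν : Measure B) : Prop :=
  γ.map Prod.fst = μ ∧ γ.map Prod.snd = ν

/-- The `α`-Wasserstein distance between `μ` and `ν` with cost function `c`:
`W_{α,c}(μ,ν) = (inf_{γ ∈ Γ(μ,ν)} ∫ c^α dγ)^{1/α}`. -/
noncomputable def Wass {A B : Type*} [MeasurableSpace A] [MeasurableSpace B]
    (α : ℝ) (c : A × B → ℝ) (μ : Measure A) (ν : Measure B) : ℝ :=
  sInf { r | ∃ γ : Measure (A × B), IsCoupling γ μ ν ∧ r = ∫ z, c z ^ α ∂γ } ^ (1 / α)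

/-- The 1-Wasserstein distance between `μ` and `ν` with cost function `c`. -/
noncomputable def W1 {A B : Type*} [MeasurableSpace A] [MeasurableSpace B]
    (c : A × B → ℝ) (μ : Measure A) (ν : Measure B) : ℝ :=
  sInf { r | ∃ γ : Measure (A × B), IsCoupling γ μ ν ∧ r = ∫ z, c z ∂γ }

/-- The risk of classifier `f` under joint distribution `p`, w.r.t. loss `ℓ`. -/
noncomputable def risk {X Y : Type*} [MeasurableSpace X] [MeasurableSpace Y]
    (ℓ : Y × Y → ℝ) (f : X → Y) (p : Measure (X × Y)) : ℝ :=
  ∫ z, ℓ (f z.1, z.2) ∂p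

/-- `f#p` : pushforward of a joint measure `p` under `(x, y) ↦ (f x, y)`. -/
noncomputable def jmap {X Y : Type*} [MeasurableSpace X] [MeasurableSpace Y]
    (f : X → Y) (p : Measure (X × Y)) : Measure (Y × Y) :=
  p.map (fun z => (f z.1, z.2))

instance jmap.instIsFiniteMeasure {X Y : Type*} [MeasurableSpace X] [MeasurableSpace Y]
    (f : X → Y) (p : Measure (X × Y)) [IsFiniteMeasure p] : IsFiniteMeasure (jmap f p) := by
  unfold jmap; infer_instance

lemma W1_nonneg' {A B : Type*} [MeasurableSpace A] [MeasurableSpace B]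
    {c : A × B → ℝ} (hc : ∀ z, 0 ≤ c z) (μ : Measure A) (ν : Measure B) :
    0 ≤ W1 c μ ν := by
  apply Real.sInf_nonneg
  rintro r ⟨γ, -, rfl⟩
  exact integral_nonneg hc

/-- Key coupling comparison lemma: if `ψ b ≤ φ a + K * c (a, b)` pointwise, then
integral comparison holds up to `K * W1`. -/
lemma coupling_bound {Y : Type*} [MeasurableSpace Y] [Fintype Y] [MeasurableSingletonClass Y]
    (c : Y × Y → ℝ) (φ ψ : Y → ℝ) (K : ℝ) (hK : 0 < K)
    (hpt : ∀ z : Y × Y, ψ z.2 ≤ φ z.1 + K * c z)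
    (μ ν : Measure Y) [IsProbabilityMeasure μ] [IsProbabilityMeasure ν] :
    ∫ y, ψ y ∂ν ≤ ∫ y, φ y ∂μ + K * W1 c μ ν := by
  have key : (∫ y, ψ y ∂ν - ∫ y, φ y ∂μ) / K ≤ W1 c μ ν := by
    apply le_csInf
    · refine ⟨∫ z, c z ∂(μ.prod ν), μ.prod ν, ⟨?_, ?_⟩, rfl⟩
      · simp [Measure.map_fst_prod, measure_univ]
      · simp [Measure.map_snd_prod, measure_univ]
    · rintro r ⟨γ, ⟨h1, h2⟩, rfl⟩
      haveI : IsProbabilityMeasure γ := by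
        constructor
        have h : γ.map Prod.fst Set.univ = 1 := by rw [h1]; exact measure_univ
        rwa [Measure.map_apply measurable_fst MeasurableSet.univ, Set.preimage_univ] at h
      have hψ : ∫ y, ψ y ∂ν = ∫ z, ψ z.2 ∂γ := by
        rw [← h2, integral_map measurable_snd.aemeasurable
          (measurable_of_countable ψ).aestronglyMeasurable]
      have hφ : ∫ y, φ y ∂μ = ∫ z, φ z.1 ∂γ := by
        rw [← h1, integral_map measurable_fst.aemeasurable
          (measurable_of_countable φ).aestronglyMeasurable]
      have hmono : ∫ z, ψ z.2 ∂γ ≤ ∫ z, (φ z.1 + K * c z) ∂γ :=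
        integral_mono .of_finite .of_finite hpt
      have hadd : ∫ z, (φ z.1 + K * c z) ∂γ = ∫ z, φ z.1 ∂γ + K * ∫ z, c z ∂γ := by
        rw [integral_add .of_finite .of_finite, integral_const_mul]
      rw [div_le_iff₀ hK]
      rw [hψ, hφ]
      linarith [hmono, hadd]
  have := (div_le_iff₀ hK).mp key
  linarith [this, mul_comm (W1 c μ ν) K]

/-- Risk decomposition via disintegration. -/
lemma risk_decomp {X Y : Type*} [MeasurableSpace X] [StandardBorelSpace X] [Nonempty X]
    [MeasurableSpace Y] [Fintype Y] [MeasurableSingletonClass Y]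
    (ℓ : Y × Y → ℝ) (hℓ : Measurable ℓ) {f : X → Y} (hf : Measurable f)
    (L : ℝ) (hb : ∀ z, ‖ℓ z‖ ≤ L)
    (p : Measure (X × Y)) [IsProbabilityMeasure p] :
    risk ℓ f p = ∫ y, ∫ x, ℓ (f x, y) ∂((p.map Prod.swap).condKernel y) ∂(p.map Prod.snd) := by
  set ρ := p.map Prod.swap with hρ
  haveI : IsProbabilityMeasure ρ := Measure.isProbabilityMeasure_map measurable_swap.aemeasurable
  have hg : Measurable (fun w : Y × X => ℓ (f w.2, w.1)) :=
    hℓ.comp ((hf.comp measurable_snd).prodMk measurable_fst)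
  have h1 : risk ℓ f p = ∫ w, ℓ (f w.2, w.1) ∂ρ := by
    rw [risk, hρ, integral_map measurable_swap.aemeasurable hg.aestronglyMeasurable]; rfl
  have hint : Integrable (fun w : Y × X => ℓ (f w.2, w.1)) (ρ.fst ⊗ₘ ρ.condKernel) := by
    rw [ρ.disintegrate ρ.condKernel]
    exact (integrable_const L).mono' hg.aestronglyMeasurable
      (Filter.Eventually.of_forall fun w => hb _)
  have h2 : ∫ w, ℓ (f w.2, w.1) ∂ρ
      = ∫ y, ∫ x, ℓ (f x, y) ∂(ρ.condKernel y) ∂ρ.fst := by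
    conv_lhs => rw [← ρ.disintegrate ρ.condKernel]
    exact Measure.integral_compProd hint
  have h3 : ρ.fst = p.map Prod.snd := by
    rw [Measure.fst, hρ, Measure.map_map measurable_fst measurable_swap]; rfl
  rw [h1, h2, h3]

theorem statement11 {X Y : Type*} [MeasurableSpace X] [StandardBorelSpace X] [Nonempty X]
    [MeasurableSpace Y] [Fintype Y] [MeasurableSingletonClass Y] [Nonempty Y]
    (ℓ : Y × Y → ℝ) (hℓmeas : Measurable ℓ)
    (hsymm : ∀ y y' : Y, ℓ (y, y') = ℓ (y', y))
    (hnonneg : ∀ y y' : Y, 0 ≤ ℓ (y, y'))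
    (htri : ∀ y₁ y₂ y₃ : Y, ℓ (y₁, y₃) ≤ ℓ (y₁, y₂) + ℓ (y₂, y₃))
    (hid : ∀ y y' : Y, ℓ (y, y') = 0 ↔ y = y')
    (L : ℝ) (hL : 0 < L) (hbound : ∀ y y' : Y, ℓ (y, y') ≤ L)
    (l : ℝ) (hl : 0 < l) (hlow : ∀ y y' : Y, y ≠ y' → l < ℓ (y, y'))
    (p q : Measure (X × Y)) [IsProbabilityMeasure p] [IsProbabilityMeasure q]
    (H : Set (X → Y)) (hH : ∀ f ∈ H, Measurable f ∧ Function.Surjective f)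
    (δ : ℝ) (hδ : 0 < δ) (hshift : W1 ℓ (p.map Prod.snd) (q.map Prod.snd) < δ)
    (κ : ℝ) (hκ : 0 < κ)
    (hCC : ∃ f ∈ H, risk ℓ f p +
      (⨆ y : Y, W1 ℓ (((p.map Prod.swap).condKernel y).map f)
        (((q.map Prod.swap).condKernel y).map f)) < κ) :
    ∃ f ∈ H, risk ℓ f p + risk ℓ f q < 2 * κ + (L + l) / l * δ := by
  obtain ⟨f, hfH, hfCC⟩ := hCC
  obtain ⟨hfm, -⟩ := hH f hfH
  refine ⟨f, hfH, ?_⟩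
  have hnorm : ∀ z : Y × Y, ‖ℓ z‖ ≤ L := fun z => by
    rw [Real.norm_eq_abs, abs_of_nonneg (hnonneg z.1 z.2)]; exact hbound z.1 z.2
  set ρp := p.map Prod.swap with hρp
  set ρq := q.map Prod.swap with hρq
  haveI : IsProbabilityMeasure ρp := Measure.isProbabilityMeasure_map measurable_swap.aemeasurable
  haveI : IsProbabilityMeasure ρq := Measure.isProbabilityMeasure_map measurable_swap.aemeasurable
  haveI : IsProbabilityMeasure (p.map Prod.snd) :=
    Measure.isProbabilityMeasure_map measurable_snd.aemeasurable
  haveI : IsProbabilityMeasure (q.map Prod.snd) :=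
    Measure.isProbabilityMeasure_map measurable_snd.aemeasurable
  set εp : Y → ℝ := fun y => ∫ x, ℓ (f x, y) ∂(ρp.condKernel y) with hεp
  set εq : Y → ℝ := fun y => ∫ x, ℓ (f x, y) ∂(ρq.condKernel y) with hεq
  set S : ℝ := ⨆ y : Y, W1 ℓ ((ρp.condKernel y).map f) ((ρq.condKernel y).map f) with hSdef
  have hℓy : ∀ y : Y, Measurable (fun yhat => ℓ (yhat, y)) := fun y => measurable_of_countable _
  have hmeasx : ∀ y : Y, Measurable (fun x => ℓ (f x, y)) := fun y =>
    hℓmeas.comp (hfm.prodMk measurable_const)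
  -- bounds on εq
  have hεq0 : ∀ y, 0 ≤ εq y := fun y => integral_nonneg fun x => hnonneg _ _
  have hεqL : ∀ y, εq y ≤ L := by
    intro y
    have hint : Integrable (fun x => ℓ (f x, y)) (ρq.condKernel y) :=
      (integrable_const L).mono' (hmeasx y).aestronglyMeasurable
        (Filter.Eventually.of_forall fun x => hnorm _)
    calc εq y ≤ ∫ _, L ∂(ρq.condKernel y) :=
          integral_mono hint (integrable_const L) fun x => by
            have := hnorm (f x, y); rwa [Real.norm_eq_abs, abs_of_nonneg (hnonneg _ _)] at this
      _ = L := by simp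
  -- S ≥ 0 and each W1 ≤ S
  have hWleS : ∀ y : Y, W1 ℓ ((ρp.condKernel y).map f) ((ρq.condKernel y).map f) ≤ S :=
    fun y =>
    le_ciSup (f := fun y' : Y => W1 ℓ ((ρp.condKernel y').map f) ((ρq.condKernel y').map f))
      (Finite.bddAbove_range _) y
  have hS0 : 0 ≤ S := by
    obtain y0 := Classical.arbitrary Y
    exact le_trans (W1_nonneg' (fun z => hnonneg z.1 z.2) _ _) (hWleS y0)
  -- step 1 : εq y ≤ εp y + S
  have step1 : ∀ y, εq y ≤ εp y + S := by
    intro y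
    haveI : IsProbabilityMeasure ((ρp.condKernel y).map f) :=
      Measure.isProbabilityMeasure_map hfm.aemeasurable
    haveI : IsProbabilityMeasure ((ρq.condKernel y).map f) :=
      Measure.isProbabilityMeasure_map hfm.aemeasurable
    have hcb := coupling_bound ℓ (fun yhat => ℓ (yhat, y)) (fun yhat => ℓ (yhat, y)) 1 one_pos
      (fun z => by
        have h := htri z.2 z.1 y
        have h2 := hsymm z.2 z.1
        simp only [one_mul]; linarith)
      ((ρp.condKernel y).map f) ((ρq.condKernel y).map f)
    have hmp : ∫ yhat, ℓ (yhat, y) ∂((ρp.condKernel y).map f) = εp y := by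
      rw [integral_map hfm.aemeasurable (hℓy y).aestronglyMeasurable]
    have hmq : ∫ yhat, ℓ (yhat, y) ∂((ρq.condKernel y).map f) = εq y := by
      rw [integral_map hfm.aemeasurable (hℓy y).aestronglyMeasurable]
    rw [hmp, hmq, one_mul] at hcb
    linarith [hWleS y]
  -- step 2 : label shift, using Lipschitz bound L/l on εq
  have hKpos : (0:ℝ) < L / l := div_pos hL hl
  have step2 : ∫ y, εq y ∂(q.map Prod.snd)
      ≤ ∫ y, εq y ∂(p.map Prod.snd) + (L / l) * W1 ℓ (p.map Prod.snd) (q.map Prod.snd) := by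
    apply coupling_bound ℓ εq εq (L / l) hKpos
    intro z
    by_cases h : z.1 = z.2
    · have h0 : 0 ≤ (L / l) * ℓ z := mul_nonneg hKpos.le (hnonneg z.1 z.2)
      rw [← h]; linarith
    · have h1 : l < ℓ (z.1, z.2) := hlow _ _ h
      have h2 : L ≤ (L / l) * ℓ (z.1, z.2) := by
        rw [div_mul_eq_mul_div, le_div_iff₀ hl]; nlinarith
      have h3 : (L / l) * ℓ z = (L / l) * ℓ (z.1, z.2) := rfl
      linarith [hεqL z.2, hεq0 z.1]
  -- risk decompositions
  have hrp : risk ℓ f p = ∫ y, εp y ∂(p.map Prod.snd) := risk_decomp ℓ hℓmeas hfm L hnorm p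
  have hrq : risk ℓ f q = ∫ y, εq y ∂(q.map Prod.snd) := risk_decomp ℓ hℓmeas hfm L hnorm q
  -- ∫ εq dp_y ≤ ∫ εp dp_y + S
  have step3 : ∫ y, εq y ∂(p.map Prod.snd) ≤ ∫ y, εp y ∂(p.map Prod.snd) + S := by
    have h1 : ∫ y, εq y ∂(p.map Prod.snd) ≤ ∫ y, (εp y + S) ∂(p.map Prod.snd) :=
      integral_mono .of_finite .of_finite step1
    have h2 : ∫ y, (εp y + S) ∂(p.map Prod.snd)
        = ∫ y, εp y ∂(p.map Prod.snd) + S := by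
      rw [integral_add .of_finite (integrable_const S)]; simp
    linarith
  set Wm := W1 ℓ (p.map Prod.snd) (q.map Prod.snd) with hWm
  have hWm0 : 0 ≤ Wm := W1_nonneg' (fun z => hnonneg z.1 z.2) _ _
  have hWmδ : (L / l) * Wm ≤ (L / l) * δ := mul_le_mul_of_nonneg_left hshift.le hKpos.le
  have hsplit : (L + l) / l * δ = (L / l) * δ + δ := by field_simp
  rw [hrp] at hfCC ⊢
  rw [hrq]
  rw [hsplit]
  linarith [hfCC, step2, step3, hδ]
end

section
/- Suppose ℓ satisfies the Metric Loss Assumption, Y is finite, the label marginals coincide (p_y = q_y), and q_y(y) > 0 for all y. If LJE(λ) holds for the hypothesis class H for some λ > 0, then CC(κ) holds for H with κ = λ · (1 + q_y(y_max)) / q_y(y_min), where y_max = argmax_y q_y(y) and y_min = argmin_y q_y(y). -/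
open MeasureTheory ProbabilityTheory

/-!
Take `f ∈ H` with `R_p(f) + R_q(f) < λ`. For a label `y`, the independent coupling of
`f#p(·|y)` and `f#q(·|y)`, with the triangle inequality through `y`, bounds their `W₁`-distance
by the sum of the conditional risks `E_p[ℓ(f x, y) | y]` and `E_q[ℓ(f x, y) | y]`. Each of these
is at most the total risk divided by the label mass `q_y(y) ≥ q_y(y_min)`, so
`R_p(f) + max_y W₁ ≤ R_p + (R_p + R_q) / q_y(y_min) < λ (1 + q_y(y_min)) / q_y(y_min)`.
-/

section Coupling

variable {A B : Type*} [MeasurableSpace A] [MeasurableSpace B] {c : A × B → ℝ}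

lemma W1_le_integral_prod (hc : ∀ z, 0 ≤ c z) (μ : Measure A) (ν : Measure B)
    [IsProbabilityMeasure μ] [IsProbabilityMeasure ν] :
    W1 c μ ν ≤ ∫ z, c z ∂(μ.prod ν) :=
  csInf_le ⟨0, by rintro r ⟨γ, -, rfl⟩; exact integral_nonneg hc⟩
    ⟨μ.prod ν, ⟨Measure.fst_prod, Measure.snd_prod⟩, rfl⟩

end Coupling

section FiniteLabels

variable {X Y : Type*} [MeasurableSpace X] [MeasurableSpace Y] [Fintype Y]
  [MeasurableSingletonClass Y]

-- Couple `μ` and `ν` independently and route all transport through the point `y`.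
lemma W1_le_integral_add_integral {ℓ : Y × Y → ℝ} (hnonneg : ∀ y y' : Y, 0 ≤ ℓ (y, y'))
    (htri : ∀ y₁ y₂ y₃ : Y, ℓ (y₁, y₃) ≤ ℓ (y₁, y₂) + ℓ (y₂, y₃)) (y : Y)
    (μ ν : Measure Y) [IsProbabilityMeasure μ] [IsProbabilityMeasure ν] :
    W1 ℓ μ ν ≤ ∫ a, ℓ (a, y) ∂μ + ∫ b, ℓ (y, b) ∂ν :=
  calc W1 ℓ μ ν ≤ ∫ z, ℓ z ∂(μ.prod ν) := W1_le_integral_prod (fun z => hnonneg z.1 z.2) μ ν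
    _ ≤ ∫ z, (ℓ (z.1, y) + ℓ (y, z.2)) ∂(μ.prod ν) :=
      integral_mono .of_finite .of_finite fun z => htri _ _ _
    _ = ∫ a, ℓ (a, y) ∂μ + ∫ b, ℓ (y, b) ∂ν := by
      rw [integral_add .of_finite .of_finite, integral_fun_fst (fun a => ℓ (a, y)),
        integral_fun_snd (fun b => ℓ (y, b))]
      simp

variable [StandardBorelSpace X] [Nonempty X]

lemma integral_eq_sum_condKernel (p : Measure (X × Y)) [IsFiniteMeasure p] {g : X × Y → ℝ}
    (hg : Integrable g p) :
    ∫ z, g z ∂p = ∑ y, ((p.map Prod.snd) {y}).toReal *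
      ∫ x, g (x, y) ∂((p.map Prod.swap).condKernel y) := by
  have hswap : ∫ z, g z ∂p = ∫ w, g w.swap ∂(p.map Prod.swap) :=
    (integral_map_equiv MeasurableEquiv.prodComm (fun w : Y × X => g w.swap)).symm
  have hg' : Integrable (fun w : Y × X => g w.swap) (p.map Prod.swap) :=
    (integrable_map_equiv MeasurableEquiv.prodComm _).mpr hg
  rw [hswap, ← Measure.integral_condKernel hg', Measure.fst_map_swap, integral_fintype .of_finite]
  rfl

lemma mul_integral_condKernel_le_integral (p : Measure (X × Y)) [IsFiniteMeasure p]
    {g : X × Y → ℝ} (hg : Integrable g p) (hg0 : 0 ≤ g) (y : Y) :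
    ((p.map Prod.snd) {y}).toReal * ∫ x, g (x, y) ∂((p.map Prod.swap).condKernel y)
      ≤ ∫ z, g z ∂p := by
  rw [integral_eq_sum_condKernel p hg]
  exact Finset.single_le_sum (f := fun y => ((p.map Prod.snd) {y}).toReal *
      ∫ x, g (x, y) ∂((p.map Prod.swap).condKernel y))
    (fun y _ => mul_nonneg ENNReal.toReal_nonneg (integral_nonneg fun x => hg0 _))
    (Finset.mem_univ y)

lemma mul_integral_condKernel_le_risk {ℓ : Y × Y → ℝ} (hnonneg : ∀ y y' : Y, 0 ≤ ℓ (y, y'))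
    (p : Measure (X × Y)) [IsFiniteMeasure p] {f : X → Y} (hf : Measurable f) (y : Y) :
    ((p.map Prod.snd) {y}).toReal * ∫ x, ℓ (f x, y) ∂((p.map Prod.swap).condKernel y)
      ≤ risk ℓ f p :=
  mul_integral_condKernel_le_integral p
    (Integrable.of_finite.comp_measurable ((hf.comp measurable_fst).prodMk measurable_snd))
    (fun _ => hnonneg _ _) y

variable {ℓ : Y × Y → ℝ} (hsymm : ∀ y y' : Y, ℓ (y, y') = ℓ (y', y))
  (hnonneg : ∀ y y' : Y, 0 ≤ ℓ (y, y'))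
  (htri : ∀ y₁ y₂ y₃ : Y, ℓ (y₁, y₃) ≤ ℓ (y₁, y₂) + ℓ (y₂, y₃))
  (p q : Measure (X × Y)) [IsProbabilityMeasure p] [IsProbabilityMeasure q]
  {f : X → Y} (hf : Measurable f)
include hsymm hnonneg htri hf

lemma W1_map_condKernel_le (y : Y) :
    W1 ℓ (((p.map Prod.swap).condKernel y).map f) (((q.map Prod.swap).condKernel y).map f)
      ≤ ∫ x, ℓ (f x, y) ∂((p.map Prod.swap).condKernel y)
        + ∫ x, ℓ (f x, y) ∂((q.map Prod.swap).condKernel y) := by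
  have hfp := Measure.isProbabilityMeasure_map (μ := (p.map Prod.swap).condKernel y)
    hf.aemeasurable
  have hfq := Measure.isProbabilityMeasure_map (μ := (q.map Prod.swap).condKernel y)
    hf.aemeasurable
  have := W1_le_integral_add_integral hnonneg htri y
    (((p.map Prod.swap).condKernel y).map f) (((q.map Prod.swap).condKernel y).map f)
  rwa [integral_map hf.aemeasurable (measurable_of_countable _).aestronglyMeasurable,
    integral_map hf.aemeasurable (measurable_of_countable _).aestronglyMeasurable,
    funext fun x => hsymm y (f x)] at this

lemma W1_map_condKernel_le_div (hmarg : p.map Prod.snd = q.map Prod.snd) {m : ℝ} (hm : 0 < m)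
    (hm_le : ∀ y, m ≤ ((q.map Prod.snd) {y}).toReal) (y : Y) :
    W1 ℓ (((p.map Prod.swap).condKernel y).map f) (((q.map Prod.swap).condKernel y).map f)
      ≤ (risk ℓ f p + risk ℓ f q) / m := by
  have hIp : 0 ≤ ∫ x, ℓ (f x, y) ∂((p.map Prod.swap).condKernel y) :=
    integral_nonneg fun x => hnonneg (f x) y
  have hIq : 0 ≤ ∫ x, ℓ (f x, y) ∂((q.map Prod.swap).condKernel y) :=
    integral_nonneg fun x => hnonneg (f x) y
  have hmp : m ≤ ((p.map Prod.snd) {y}).toReal := hmarg ▸ hm_le y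
  rw [le_div_iff₀' hm]
  calc m * W1 ℓ (((p.map Prod.swap).condKernel y).map f) (((q.map Prod.swap).condKernel y).map f)
      ≤ m * ∫ x, ℓ (f x, y) ∂((p.map Prod.swap).condKernel y)
        + m * ∫ x, ℓ (f x, y) ∂((q.map Prod.swap).condKernel y) := by
        rw [← mul_add]
        exact mul_le_mul_of_nonneg_left (W1_map_condKernel_le hsymm hnonneg htri p q hf y) hm.le
    _ ≤ risk ℓ f p + risk ℓ f q := by
        gcongr
        · exact (mul_le_mul_of_nonneg_right hmp hIp).trans
            (mul_integral_condKernel_le_risk hnonneg p hf y)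
        · exact (mul_le_mul_of_nonneg_right (hm_le y) hIq).trans
            (mul_integral_condKernel_le_risk hnonneg q hf y)

end FiniteLabels

theorem statement13_general {X Y : Type*} [MeasurableSpace X] [StandardBorelSpace X] [Nonempty X]
    [MeasurableSpace Y] [Fintype Y] [MeasurableSingletonClass Y]
    (ℓ : Y × Y → ℝ)
    (hsymm : ∀ y y' : Y, ℓ (y, y') = ℓ (y', y))
    (hnonneg : ∀ y y' : Y, 0 ≤ ℓ (y, y'))
    (htri : ∀ y₁ y₂ y₃ : Y, ℓ (y₁, y₃) ≤ ℓ (y₁, y₂) + ℓ (y₂, y₃))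
    (p q : Measure (X × Y)) [IsProbabilityMeasure p] [IsProbabilityMeasure q]
    (H : Set (X → Y)) (hH : ∀ f ∈ H, Measurable f)
    (hmarg : p.map Prod.snd = q.map Prod.snd)
    (hpos : ∀ y : Y, 0 < (q.map Prod.snd) {y})
    (ymin ymax : Y)
    (hymin : ∀ y : Y, (q.map Prod.snd) {ymin} ≤ (q.map Prod.snd) {y})
    (lam : ℝ)
    (hLJE : ∃ f ∈ H, risk ℓ f p + risk ℓ f q < lam) :
    ∃ f ∈ H, risk ℓ f p +
      (⨆ y : Y, W1 ℓ (((p.map Prod.swap).condKernel y).map f)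
        (((q.map Prod.swap).condKernel y).map f)) <
      lam * (1 + ((q.map Prod.snd) {ymax}).toReal) / ((q.map Prod.snd) {ymin}).toReal := by
  obtain ⟨f, hfH, hlam⟩ := hLJE
  refine ⟨f, hfH, ?_⟩
  set m := ((q.map Prod.snd) {ymin}).toReal
  have hm : 0 < m := ENNReal.toReal_pos (hpos ymin).ne' (measure_ne_top _ _)
  have hm_le (y : Y) : m ≤ ((q.map Prod.snd) {y}).toReal :=
    ENNReal.toReal_mono (measure_ne_top _ _) (hymin y)
  have hRp0 : 0 ≤ risk ℓ f p := integral_nonneg fun _ => hnonneg _ _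
  have hRq0 : 0 ≤ risk ℓ f q := integral_nonneg fun _ => hnonneg _ _
  have : Nonempty Y := ⟨ymin⟩
  calc risk ℓ f p + ⨆ y, W1 ℓ (((p.map Prod.swap).condKernel y).map f)
        (((q.map Prod.swap).condKernel y).map f)
      ≤ risk ℓ f p + (risk ℓ f p + risk ℓ f q) / m := by
        gcongr
        exact ciSup_le <| W1_map_condKernel_le_div hsymm hnonneg htri p q (hH f hfH) hmarg hm hm_le
    _ < lam + lam / m := by gcongr; linarith
    _ = lam * (1 + m) / m := by field_simp; ring
    _ ≤ lam * (1 + ((q.map Prod.snd) {ymax}).toReal) / m := by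
        gcongr
        · linarith
        · exact hm_le ymax

theorem statement13 {X Y : Type*} [MeasurableSpace X] [StandardBorelSpace X] [Nonempty X]
    [MeasurableSpace Y] [Fintype Y] [MeasurableSingletonClass Y] [Nonempty Y]
    (ℓ : Y × Y → ℝ) (hℓmeas : Measurable ℓ)
    (hsymm : ∀ y y' : Y, ℓ (y, y') = ℓ (y', y))
    (hnonneg : ∀ y y' : Y, 0 ≤ ℓ (y, y'))
    (htri : ∀ y₁ y₂ y₃ : Y, ℓ (y₁, y₃) ≤ ℓ (y₁, y₂) + ℓ (y₂, y₃))
    (hid : ∀ y y' : Y, ℓ (y, y') = 0 ↔ y = y')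
    (p q : Measure (X × Y)) [IsProbabilityMeasure p] [IsProbabilityMeasure q]
    (H : Set (X → Y)) (hH : ∀ f ∈ H, Measurable f)
    (hmarg : p.map Prod.snd = q.map Prod.snd)
    (hpos : ∀ y : Y, 0 < (q.map Prod.snd) {y})
    (ymin ymax : Y)
    (hymin : ∀ y : Y, (q.map Prod.snd) {ymin} ≤ (q.map Prod.snd) {y})
    (hymax : ∀ y : Y, (q.map Prod.snd) {y} ≤ (q.map Prod.snd) {ymax})
    (lam : ℝ) (hlam : 0 < lam)
    (hLJE : ∃ f ∈ H, risk ℓ f p + risk ℓ f q < lam) :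
    ∃ f ∈ H, risk ℓ f p +
      (⨆ y : Y, W1 ℓ (((p.map Prod.swap).condKernel y).map f)
        (((q.map Prod.swap).condKernel y).map f)) <
      lam * (1 + ((q.map Prod.snd) {ymax}).toReal) / ((q.map Prod.snd) {ymin}).toReal :=
  statement13_general ℓ hsymm hnonneg htri p q H hH hmarg hpos ymin ymax hymin lam hLJE
end
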